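/- arXiv:gr-qc/0209034 — 2 statements merged into one kernel-verified Lean document; each statement's English description precedes it below -/
import Mathlib

section
/- In the universal enveloping algebra of su(2) with [Z_i,Z_j] = ε_{ijk}Z_k, let Z'^α be the symmetrized monomial of degree m = |α|, and set Z^α = f(α) Z'^α where f(α) = c√(α₁!α₂!α₃!/|α|!); then Z^α Z₁ - Z₁ Z^α = -√(α₂(α₃+1))·Z^{(α₁,α₂-1,α₃+1)} + √(α₃(α₂+1))·Z^{(α₁,α₂+1,α₃-1)}, where terms with a negative index are interpreted as zero. -/
open Finset

/-- The Levi-Civita symbol on `Fin 3`, with `ε 0 1 2 = 1`. -/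
noncomputable def leviCivita (i j k : Fin 3) : ℝ :=
  (((j : ℝ) - (i : ℝ)) * ((k : ℝ) - (j : ℝ)) * ((k : ℝ) - (i : ℝ))) / 2

/-- The symmetrized monomial `Z'^α` in the universal enveloping algebra. -/
noncomputable def symMonomial {L : Type*} [LieRing L] [LieAlgebra ℝ L]
    (Z : Fin 3 → L) (α : Fin 3 → ℕ) : UniversalEnvelopingAlgebra ℝ L :=
  ∑ w ∈ Finset.univ.filter
      (fun w : Fin (α 0 + α 1 + α 2) → Fin 3 =>
        ∀ i : Fin 3, (Finset.univ.filter (fun j => w j = i)).card = α i),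
    (List.ofFn (fun j => UniversalEnvelopingAlgebra.ι ℝ (Z (w j)))).prod

/-- The normalized symmetrized monomial `Z^α = f(α) Z'^α`,
`f(α) = c √(α₁!α₂!α₃!/|α|!)`. -/
noncomputable def normSymMonomial {L : Type*} [LieRing L] [LieAlgebra ℝ L]
    (c : ℝ) (Z : Fin 3 → L) (α : Fin 3 → ℕ) : UniversalEnvelopingAlgebra ℝ L :=
  (c * Real.sqrt (((α 0).factorial * (α 1).factorial * (α 2).factorial : ℝ)
      / ((α 0 + α 1 + α 2).factorial : ℝ))) • symMonomial Z α


section prodF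
variable {R : Type*} [Ring R]

noncomputable def prodF {m : ℕ} (w : Fin m → R) : R := (List.ofFn w).prod

lemma prodF_cons {m : ℕ} (a : R) (v : Fin m → R) : prodF (Fin.cons a v) = a * prodF v := by
  simp [prodF, List.ofFn_succ]

lemma prodF_update_exists (m : ℕ) : ∀ (w : Fin m → R) (j : Fin m),
    ∃ p q : R, ∀ c, prodF (Function.update w j c) = p * c * q := by
  induction m with
  | zero => intro w j; exact j.elim0
  | succ m ih =>
    intro w j
    cases j using Fin.cases with
    | zero =>
      refine ⟨1, prodF (Fin.tail w), fun c => ?_⟩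
      conv_lhs => rw [← Fin.cons_self_tail w]
      rw [Fin.update_cons_zero, prodF_cons, one_mul]
    | succ i =>
      obtain ⟨p, q, hpq⟩ := ih (Fin.tail w) i
      refine ⟨w 0 * p, q, fun c => ?_⟩
      conv_lhs => rw [← Fin.cons_self_tail w]
      rw [← Fin.cons_update, prodF_cons, hpq, mul_assoc, mul_assoc, mul_assoc]

lemma prodF_comm (x : R) (m : ℕ) : ∀ (w : Fin m → R),
    prodF w * x - x * prodF w = ∑ j, prodF (Function.update w j (w j * x - x * w j)) := by
  induction m with
  | zero => intro w; simp [prodF]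
  | succ m ih =>
    intro w
    rw [← Fin.cons_self_tail w]
    set a := w 0 with ha
    set v := Fin.tail w with hv
    rw [prodF_cons, Fin.sum_univ_succ]
    have h0 : Function.update (Fin.cons a v : Fin (m+1) → R) 0
          ((Fin.cons a v : Fin (m+1) → R) 0 * x - x * (Fin.cons a v : Fin (m+1) → R) 0)
        = (Fin.cons (a * x - x * a) v : Fin (m+1) → R) := by
      rw [Fin.cons_zero, Fin.update_cons_zero]
    have hs : ∀ j : Fin m, Function.update (Fin.cons a v : Fin (m+1) → R) j.succ
        ((Fin.cons a v : Fin (m+1) → R) j.succ * x - x * (Fin.cons a v : Fin (m+1) → R) j.succ)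
        = (Fin.cons a (Function.update v j (v j * x - x * v j)) : Fin (m+1) → R) := by
      intro j; rw [Fin.cons_succ, Fin.cons_update]
    rw [h0, prodF_cons]
    calc a * prodF v * x - x * (a * prodF v)
        = (a * x - x * a) * prodF v + a * (prodF v * x - x * prodF v) := by noncomm_ring
      _ = _ := by
          rw [ih v, Finset.mul_sum]
          congr 1
          refine Finset.sum_congr rfl fun j _ => ?_
          rw [hs j, prodF_cons]

lemma prodF_update_zero {m : ℕ} (w : Fin m → R) (j : Fin m) :
    prodF (Function.update w j (0 : R)) = 0 := by
  obtain ⟨p, q, hpq⟩ := prodF_update_exists m w j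
  simp [hpq]

lemma prodF_update_neg {m : ℕ} (w : Fin m → R) (j : Fin m) (c : R) :
    prodF (Function.update w j (-c)) = -prodF (Function.update w j c) := by
  obtain ⟨p, q, hpq⟩ := prodF_update_exists m w j
  simp [hpq]

end prodF

section counts
variable {m : ℕ}

lemma fiber_update_of_ne (w : Fin m → Fin 3) (j : Fin m) (a i : Fin 3)
    (h1 : w j ≠ i) (h2 : a ≠ i) :
    (univ.filter fun k => Function.update w j a k = i)
      = univ.filter fun k => w k = i := by
  ext k
  simp only [mem_filter, mem_univ, true_and, Function.update_apply]
  rcases eq_or_ne k j with rfl | hk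
  · simp [h1, h2]
  · simp [hk]

lemma fiber_update_self (w : Fin m → Fin 3) (j : Fin m) (a i : Fin 3)
    (h1 : w j = i) (h2 : a ≠ i) :
    (univ.filter fun k => Function.update w j a k = i)
      = (univ.filter fun k => w k = i).erase j := by
  ext k
  simp only [mem_erase, mem_filter, mem_univ, true_and, Function.update_apply]
  rcases eq_or_ne k j with rfl | hk
  · simp [h2]
  · simp [hk]

lemma fiber_update_new (w : Fin m → Fin 3) (j : Fin m) (a i : Fin 3)
    (h1 : w j ≠ i) (h2 : a = i) :
    (univ.filter fun k => Function.update w j a k = i)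
      = insert j (univ.filter fun k => w k = i) := by
  ext k
  simp only [mem_insert, mem_filter, mem_univ, true_and, Function.update_apply]
  rcases eq_or_ne k j with rfl | hk
  · simp [h2]
  · simp [hk]

lemma card_fiber_update_of_ne (w : Fin m → Fin 3) (j : Fin m) (a i : Fin 3)
    (h1 : w j ≠ i) (h2 : a ≠ i) :
    (univ.filter fun k => Function.update w j a k = i).card
      = (univ.filter fun k => w k = i).card := by
  rw [fiber_update_of_ne w j a i h1 h2]

lemma card_fiber_update_self (w : Fin m → Fin 3) (j : Fin m) (a i : Fin 3)
    (h1 : w j = i) (h2 : a ≠ i) :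
    (univ.filter fun k => Function.update w j a k = i).card + 1
      = (univ.filter fun k => w k = i).card := by
  rw [fiber_update_self w j a i h1 h2]
  exact Finset.card_erase_add_one (by simp [h1])

lemma card_fiber_update_new (w : Fin m → Fin 3) (j : Fin m) (a i : Fin 3)
    (h1 : w j ≠ i) (h2 : a = i) :
    (univ.filter fun k => Function.update w j a k = i).card
      = (univ.filter fun k => w k = i).card + 1 := by
  rw [fiber_update_new w j a i h1 h2]
  exact Finset.card_insert_of_notMem (by simp [h1])

lemma sum_counts (w : Fin m → Fin 3) :
    (univ.filter fun k => w k = 0).card + (univ.filter fun k => w k = 1).card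
      + (univ.filter fun k => w k = 2).card = m := by
  have h := Finset.card_eq_sum_card_fiberwise
    (f := w) (s := (univ : Finset (Fin m))) (t := (univ : Finset (Fin 3)))
    (fun x _ => mem_univ _)
  rw [Fin.sum_univ_three] at h
  simpa using h.symm

end counts

section uea
variable {L : Type*} [LieRing L] [LieAlgebra ℝ L]

def wordSet (m : ℕ) (α : Fin 3 → ℕ) : Finset (Fin m → Fin 3) :=
  Finset.univ.filter (fun w => ∀ i : Fin 3, (Finset.univ.filter (fun j => w j = i)).card = α i)

noncomputable def wordProd (Z : Fin 3 → L) {m : ℕ} (w : Fin m → Fin 3) :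
    UniversalEnvelopingAlgebra ℝ L :=
  prodF (fun j => UniversalEnvelopingAlgebra.ι ℝ (Z (w j)))

noncomputable def symAux (Z : Fin 3 → L) (m : ℕ) (α : Fin 3 → ℕ) :
    UniversalEnvelopingAlgebra ℝ L :=
  ∑ w ∈ wordSet m α, wordProd Z w

lemma symMonomial_eq (Z : Fin 3 → L) (α : Fin 3 → ℕ) :
    symMonomial Z α = symAux Z (α 0 + α 1 + α 2) α := rfl

lemma counts_of_mem {m : ℕ} {α : Fin 3 → ℕ} {w : Fin m → Fin 3} (hw : w ∈ wordSet m α) :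
    ∀ i : Fin 3, (Finset.univ.filter (fun j => w j = i)).card = α i :=
  (Finset.mem_filter.mp hw).2

lemma sum_of_mem {m : ℕ} {α : Fin 3 → ℕ} {w : Fin m → Fin 3} (hw : w ∈ wordSet m α) :
    α 0 + α 1 + α 2 = m := by
  have h := counts_of_mem hw
  rw [← h 0, ← h 1, ← h 2]
  exact sum_counts w

lemma reindex {m : ℕ} (Z : Fin 3 → L) (a b : Fin 3) (hab : a ≠ b)
    (α β : Fin 3 → ℕ)
    (hβa : β a + 1 = α a) (hβb : β b = α b + 1)
    (hother : ∀ i, i ≠ a → i ≠ b → β i = α i) :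
    ∑ w ∈ wordSet m α, ∑ j ∈ univ.filter (fun j => w j = a), wordProd Z (Function.update w j b)
      = (α b + 1) • symAux Z m β := by
  have hR : ∀ w' ∈ wordSet m β, (∑ j ∈ univ.filter (fun j => w' j = b), wordProd Z w')
      = (α b + 1) • wordProd Z w' := by
    intro w' hw'
    rw [Finset.sum_const]
    congr 1
    rw [counts_of_mem hw' b, hβb]
  rw [symAux, Finset.smul_sum, ← Finset.sum_congr rfl hR,
    Finset.sum_sigma', Finset.sum_sigma']
  refine Finset.sum_nbij' (fun p => ⟨Function.update p.1 p.2 b, p.2⟩)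
    (fun p => ⟨Function.update p.1 p.2 a, p.2⟩) ?_ ?_ ?_ ?_ ?_
  · rintro ⟨w, j⟩ hp
    rw [Finset.mem_sigma] at hp
    obtain ⟨hw, hj⟩ := hp
    have hwj : w j = a := by simpa using hj
    have hcnt := counts_of_mem hw
    rw [Finset.mem_sigma]
    constructor
    · rw [wordSet, Finset.mem_filter]
      refine ⟨mem_univ _, fun i => ?_⟩
      show (Finset.univ.filter (fun k => Function.update w j b k = i)).card = β i
      rcases eq_or_ne i a with hia | hia
      · rw [hia]
        have h := card_fiber_update_self w j b a hwj (Ne.symm hab)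
        rw [hcnt a] at h
        omega
      · rcases eq_or_ne i b with hib | hib
        · rw [hib, card_fiber_update_new w j b b (by rw [hwj]; exact hab) rfl, hcnt b, hβb]
        · rw [card_fiber_update_of_ne w j b i (by rw [hwj]; exact Ne.symm hia) (Ne.symm hib),
            hcnt i, hother i hia hib]
    · simp
  · rintro ⟨w, j⟩ hp
    rw [Finset.mem_sigma] at hp
    obtain ⟨hw, hj⟩ := hp
    have hwj : w j = b := by simpa using hj
    have hcnt := counts_of_mem hw
    rw [Finset.mem_sigma]
    constructor
    · rw [wordSet, Finset.mem_filter]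
      refine ⟨mem_univ _, fun i => ?_⟩
      show (Finset.univ.filter (fun k => Function.update w j a k = i)).card = α i
      rcases eq_or_ne i a with hia | hia
      · rw [hia, card_fiber_update_new w j a a (by rw [hwj]; exact Ne.symm hab) rfl, hcnt a]
        omega
      · rcases eq_or_ne i b with hib | hib
        · rw [hib]
          have h := card_fiber_update_self w j a b hwj hab
          rw [hcnt b] at h
          omega
        · rw [card_fiber_update_of_ne w j a i (by rw [hwj]; exact Ne.symm hib) (Ne.symm hia),
            hcnt i, hother i hia hib]
    · simp
  · rintro ⟨w, j⟩ hp
    rw [Finset.mem_sigma] at hp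
    obtain ⟨hw, hj⟩ := hp
    have hwj : w j = a := by simpa using hj
    show (⟨Function.update (Function.update w j b) j a, j⟩ : (_ : Fin m → Fin 3) × Fin m) = ⟨w, j⟩
    rw [Function.update_idem, ← hwj, Function.update_eq_self]
  · rintro ⟨w, j⟩ hp
    rw [Finset.mem_sigma] at hp
    obtain ⟨hw, hj⟩ := hp
    have hwj : w j = b := by simpa using hj
    show (⟨Function.update (Function.update w j a) j b, j⟩ : (_ : Fin m → Fin 3) × Fin m) = ⟨w, j⟩
    rw [Function.update_idem, ← hwj, Function.update_eq_self]
  · rintro ⟨w, j⟩ hp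
    rfl

lemma fin3_cases (v : Fin 3) : v = 0 ∨ v = 1 ∨ v = 2 := by revert v; decide

lemma symAux_zero_of_sum_ne {m : ℕ} (Z : Fin 3 → L) (β : Fin 3 → ℕ)
    (h : β 0 + β 1 + β 2 ≠ m) : symAux Z m β = 0 := by
  rw [symAux]
  refine Finset.sum_eq_zero fun w hw => absurd (sum_of_mem hw) h

lemma symAux_comm (B : Module.Basis (Fin 3) ℝ L)
    (hB : ∀ i j, ⁅B i, B j⁆ = ∑ k, leviCivita i j k • B k)
    (α : Fin 3 → ℕ) (m : ℕ) (hm : α 0 + α 1 + α 2 = m) :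
    symAux (⇑B) m α * UniversalEnvelopingAlgebra.ι ℝ (B 0)
      - UniversalEnvelopingAlgebra.ι ℝ (B 0) * symAux (⇑B) m α
    = -((α 2 + 1) • symAux (⇑B) m ![α 0, α 1 - 1, α 2 + 1])
      + (α 1 + 1) • symAux (⇑B) m ![α 0, α 1 + 1, α 2 - 1] := by
  classical
  have hlie0 : ⁅B 0, B 0⁆ = 0 := lie_self _
  have hlie1 : ⁅B 1, B 0⁆ = -(B 2) := by
    rw [hB, Fin.sum_univ_three]
    norm_num [leviCivita]
  have hlie2 : ⁅B 2, B 0⁆ = B 1 := by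
    rw [hB, Fin.sum_univ_three]
    norm_num [leviCivita]
  set x := UniversalEnvelopingAlgebra.ι ℝ (B 0) with hx
  have key : ∀ w : Fin m → Fin 3,
      wordProd (⇑B) w * x - x * wordProd (⇑B) w
      = (∑ j ∈ univ.filter (fun j => w j = 1), -(wordProd (⇑B) (Function.update w j 2)))
        + ∑ j ∈ univ.filter (fun j => w j = 2), wordProd (⇑B) (Function.update w j 1) := by
    intro w
    rw [wordProd, prodF_comm]
    have hterm : ∀ j : Fin m,
        prodF (Function.update (fun k => UniversalEnvelopingAlgebra.ι ℝ (B (w k))) j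
          ((fun k => UniversalEnvelopingAlgebra.ι ℝ (B (w k))) j * x
            - x * (fun k => UniversalEnvelopingAlgebra.ι ℝ (B (w k))) j))
        = (if w j = 1 then -(wordProd (⇑B) (Function.update w j 2)) else 0)
          + (if w j = 2 then wordProd (⇑B) (Function.update w j 1) else 0) := by
      intro j
      have hupd : ∀ v : Fin 3,
          Function.update (fun k => UniversalEnvelopingAlgebra.ι ℝ (B (w k))) j
            (UniversalEnvelopingAlgebra.ι ℝ (B v))
          = fun k => UniversalEnvelopingAlgebra.ι ℝ (B (Function.update w j v k)) := by
        intro v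
        ext k
        rcases eq_or_ne k j with rfl | hk
        · simp
        · simp [Function.update_apply, hk]
      have hc : (fun k => UniversalEnvelopingAlgebra.ι ℝ (B (w k))) j * x
          - x * (fun k => UniversalEnvelopingAlgebra.ι ℝ (B (w k))) j
          = UniversalEnvelopingAlgebra.ι ℝ ⁅B (w j), B 0⁆ := by
        letI := LieRing.ofAssociativeRing (A := UniversalEnvelopingAlgebra ℝ L)
        rw [LieHom.map_lie, Ring.lie_def, hx]
      rw [hc]
      rcases fin3_cases (w j) with h | h | h
      · rw [h, hlie0, map_zero, prodF_update_zero, if_neg (by decide),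
          if_neg (by decide), add_zero]
      · rw [h, hlie1, map_neg, prodF_update_neg, hupd 2, if_pos rfl,
          if_neg (by decide), add_zero, wordProd]
      · rw [h, hlie2, hupd 1, if_neg (by decide), if_pos rfl, zero_add, wordProd]
    rw [Finset.sum_congr rfl (fun j _ => hterm j), Finset.sum_add_distrib,
      ← Finset.sum_filter, ← Finset.sum_filter]
  rw [symAux, Finset.sum_mul, Finset.mul_sum, ← Finset.sum_sub_distrib,
    Finset.sum_congr rfl (fun w _ => key w), Finset.sum_add_distrib]
  congr 1
  · have hneg : ∀ w ∈ wordSet m α, (∑ j ∈ univ.filter (fun j => w j = 1),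
        -(wordProd (⇑B) (Function.update w j 2)))
        = -(∑ j ∈ univ.filter (fun j => w j = 1), wordProd (⇑B) (Function.update w j 2)) := by
      intro w _; rw [Finset.sum_neg_distrib]
    rw [Finset.sum_congr rfl hneg, Finset.sum_neg_distrib, neg_inj]
    by_cases h1 : α 1 = 0
    · have hL : (∑ w ∈ wordSet m α, ∑ j ∈ univ.filter (fun j => w j = 1),
          wordProd (⇑B) (Function.update w j 2)) = 0 := by
        refine Finset.sum_eq_zero fun w hw => ?_
        have he : (univ.filter fun j => w j = 1) = ∅ :=
          Finset.card_eq_zero.mp (by rw [counts_of_mem hw 1, h1])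
        rw [he, Finset.sum_empty]
      rw [hL, symAux_zero_of_sum_ne _ _ (by simp; omega), smul_zero]
    · exact reindex (⇑B) 1 2 (by decide) α ![α 0, α 1 - 1, α 2 + 1]
        (by simp; omega) (by simp)
        (by intro i hi1 hi2; fin_cases i <;> simp_all)
  · by_cases h2 : α 2 = 0
    · have hL : (∑ w ∈ wordSet m α, ∑ j ∈ univ.filter (fun j => w j = 2),
          wordProd (⇑B) (Function.update w j 1)) = 0 := by
        refine Finset.sum_eq_zero fun w hw => ?_
        have he : (univ.filter fun j => w j = 2) = ∅ :=
          Finset.card_eq_zero.mp (by rw [counts_of_mem hw 2, h2])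
        rw [he, Finset.sum_empty]
      rw [hL, symAux_zero_of_sum_ne _ _ (by simp; omega), smul_zero]
    · exact reindex (⇑B) 2 1 (by decide) α ![α 0, α 1 + 1, α 2 - 1]
        (by simp; omega) (by simp)
        (by intro i hi1 hi2; fin_cases i <;> simp_all)

lemma coeff_sqrt (c : ℝ) (a n k M : ℕ) :
    (c * Real.sqrt ((a.factorial : ℝ) * ((n + 1).factorial : ℝ) * (k.factorial : ℝ)
        / (M.factorial : ℝ))) * ((k : ℝ) + 1)
    = Real.sqrt (((n : ℝ) + 1) * ((k : ℝ) + 1)) *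
      (c * Real.sqrt ((a.factorial : ℝ) * (n.factorial : ℝ) * ((k + 1).factorial : ℝ)
        / (M.factorial : ℝ))) := by
  have hk : (0 : ℝ) ≤ (k : ℝ) + 1 := by positivity
  have hA : (0 : ℝ) ≤ (a.factorial : ℝ) * ((n + 1).factorial : ℝ) * (k.factorial : ℝ)
      / (M.factorial : ℝ) := by positivity
  have hs : (0 : ℝ) ≤ ((n : ℝ) + 1) * ((k : ℝ) + 1) := by positivity
  have key : Real.sqrt ((a.factorial : ℝ) * ((n + 1).factorial : ℝ) * (k.factorial : ℝ)
        / (M.factorial : ℝ)) * ((k : ℝ) + 1)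
      = Real.sqrt (((n : ℝ) + 1) * ((k : ℝ) + 1)) *
        Real.sqrt ((a.factorial : ℝ) * (n.factorial : ℝ) * ((k + 1).factorial : ℝ)
        / (M.factorial : ℝ)) := by
    conv_lhs => rw [← Real.sqrt_sq hk, ← Real.sqrt_mul hA]
    rw [← Real.sqrt_mul hs]
    congr 1
    have hM : (M.factorial : ℝ) ≠ 0 := by positivity
    field_simp
    rw [Nat.factorial_succ (n := n), Nat.factorial_succ (n := k)]
    push_cast
    ring
  calc (c * Real.sqrt _) * ((k : ℝ) + 1)
      = c * (Real.sqrt _ * ((k : ℝ) + 1)) := by ring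
    _ = c * (Real.sqrt (((n : ℝ) + 1) * ((k : ℝ) + 1)) * Real.sqrt _) := by rw [key]
    _ = _ := by ring

lemma coeff_sqrt' (c : ℝ) (a k n M : ℕ) :
    (c * Real.sqrt ((a.factorial : ℝ) * (k.factorial : ℝ) * ((n + 1).factorial : ℝ)
        / (M.factorial : ℝ))) * ((k : ℝ) + 1)
    = Real.sqrt (((n : ℝ) + 1) * ((k : ℝ) + 1)) *
      (c * Real.sqrt ((a.factorial : ℝ) * ((k + 1).factorial : ℝ) * (n.factorial : ℝ)
        / (M.factorial : ℝ))) := by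
  have hk : (0 : ℝ) ≤ (k : ℝ) + 1 := by positivity
  have hA : (0 : ℝ) ≤ (a.factorial : ℝ) * (k.factorial : ℝ) * ((n + 1).factorial : ℝ)
      / (M.factorial : ℝ) := by positivity
  have hs : (0 : ℝ) ≤ ((n : ℝ) + 1) * ((k : ℝ) + 1) := by positivity
  have key : Real.sqrt ((a.factorial : ℝ) * (k.factorial : ℝ) * ((n + 1).factorial : ℝ)
        / (M.factorial : ℝ)) * ((k : ℝ) + 1)
      = Real.sqrt (((n : ℝ) + 1) * ((k : ℝ) + 1)) *
        Real.sqrt ((a.factorial : ℝ) * ((k + 1).factorial : ℝ) * (n.factorial : ℝ)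
        / (M.factorial : ℝ)) := by
    conv_lhs => rw [← Real.sqrt_sq hk, ← Real.sqrt_mul hA]
    rw [← Real.sqrt_mul hs]
    congr 1
    have hM : (M.factorial : ℝ) ≠ 0 := by positivity
    field_simp
    rw [Nat.factorial_succ (n := n), Nat.factorial_succ (n := k)]
    push_cast
    ring
  calc (c * Real.sqrt _) * ((k : ℝ) + 1)
      = c * (Real.sqrt _ * ((k : ℝ) + 1)) := by ring
    _ = c * (Real.sqrt (((n : ℝ) + 1) * ((k : ℝ) + 1)) * Real.sqrt _) := by rw [key]
    _ = _ := by ring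

lemma symAux_comm_smul (B : Module.Basis (Fin 3) ℝ L)
    (hB : ∀ i j, ⁅B i, B j⁆ = ∑ k, leviCivita i j k • B k)
    (α : Fin 3 → ℕ) (m : ℕ) (hm : α 0 + α 1 + α 2 = m) (r : ℝ) :
    (r • symAux (⇑B) m α) * UniversalEnvelopingAlgebra.ι ℝ (B 0)
      - UniversalEnvelopingAlgebra.ι ℝ (B 0) * (r • symAux (⇑B) m α)
    = -((r * ((α 2 : ℝ) + 1)) • symAux (⇑B) m ![α 0, α 1 - 1, α 2 + 1])
      + (r * ((α 1 : ℝ) + 1)) • symAux (⇑B) m ![α 0, α 1 + 1, α 2 - 1] := by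
  rw [smul_mul_assoc, mul_smul_comm, ← smul_sub, symAux_comm B hB α m hm, smul_add, smul_neg,
    ← Nat.cast_smul_eq_nsmul ℝ (α 2 + 1), ← Nat.cast_smul_eq_nsmul ℝ (α 1 + 1),
    smul_smul, smul_smul]
  push_cast
  rfl

end uea


/-- Commutation relation for the normalized symmetrized monomials:
`Z^α Z₁ - Z₁ Z^α = -√(α₂(α₃+1)) Z^{(α₁,α₂-1,α₃+1)} + √(α₃(α₂+1)) Z^{(α₁,α₂+1,α₃-1)}`
(terms with a negative index are interpreted as zero, as their coefficient vanishes). -/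
theorem normSymMonomial_commutation {L : Type*} [LieRing L] [LieAlgebra ℝ L]
    (B : Module.Basis (Fin 3) ℝ L)
    (hB : ∀ i j, ⁅B i, B j⁆ = ∑ k, leviCivita i j k • B k)
    (c : ℝ) (hc : 0 < c) (α : Fin 3 → ℕ) :
    normSymMonomial c (⇑B) α * UniversalEnvelopingAlgebra.ι ℝ (B 0)
      - UniversalEnvelopingAlgebra.ι ℝ (B 0) * normSymMonomial c (⇑B) α
    = (- Real.sqrt ((α 1 : ℝ) * ((α 2 : ℝ) + 1)))
        • normSymMonomial c (⇑B) ![α 0, α 1 - 1, α 2 + 1]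
      + Real.sqrt ((α 2 : ℝ) * ((α 1 : ℝ) + 1))
        • normSymMonomial c (⇑B) ![α 0, α 1 + 1, α 2 - 1] := by
  classical
  simp only [normSymMonomial, symMonomial_eq, Matrix.cons_val_zero, Matrix.cons_val_one,
    Matrix.head_cons, Matrix.cons_val_two, Matrix.tail_cons]
  rw [symAux_comm_smul B hB α (α 0 + α 1 + α 2) rfl]
  congr 1
  · rw [neg_smul, smul_smul, neg_inj]
    by_cases h1 : α 1 = 0
    · rw [h1, symAux_zero_of_sum_ne (⇑B) ![α 0, 0 - 1, α 2 + 1] (by simp), smul_zero]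
      simp
    · obtain ⟨n, hn⟩ : ∃ n, α 1 = n + 1 := ⟨α 1 - 1, by omega⟩
      have hmm : α 0 + (α 1 - 1) + (α 2 + 1) = α 0 + α 1 + α 2 := by omega
      rw [hmm, hn, Nat.succ_sub_one]
      push_cast
      rw [coeff_sqrt c (α 0) n (α 2) (α 0 + (n+1) + α 2)]
  · rw [smul_smul]
    by_cases h2 : α 2 = 0
    · rw [h2, symAux_zero_of_sum_ne (⇑B) ![α 0, α 1 + 1, 0 - 1] (by simp), smul_zero]
      simp
    · obtain ⟨n, hn⟩ : ∃ n, α 2 = n + 1 := ⟨α 2 - 1, by omega⟩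
      have hmm : α 0 + (α 1 + 1) + (α 2 - 1) = α 0 + α 1 + α 2 := by omega
      rw [hmm, hn, Nat.succ_sub_one]
      push_cast
      rw [coeff_sqrt' c (α 0) (α 1) n (α 0 + α 1 + (n+1))]
end

section
/- Suppose u: [0,1) → ℝ is continuous, non-negative, and satisfies (1-t)·u(t) ≤ u(0) + 4∫_0^t u(s) ds for all t ∈ [0,1). Then u(t) ≤ (1-t)^{-5} u(0) for all t ∈ [0,1). -/
open Set

/-!
With `v t = u 0 + k ∫₀ᵗ u`, the hypothesis reads `(1 - t) u ≤ v`, i.e. `v' = k u ≤ k v / (1 - t)`.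
This is exactly the statement that `v t (1 - t)ᵏ` is nonincreasing, so
`(1 - t)ᵏ⁺¹ u t ≤ (1 - t)ᵏ v t ≤ v 0 = u 0`.
-/

open intervalIntegral in
theorem hasDerivAt_integral_of_continuousOn_Icc {u : ℝ → ℝ} {a b x : ℝ}
    (hu : ContinuousOn u (Icc a b)) (hx : x ∈ Ioo a b) :
    HasDerivAt (fun t => ∫ s in a..t, u s) (u x) x :=
  integral_hasDerivAt_right
    ((hu.mono (Icc_subset_Icc_right hx.2.le)).intervalIntegrable_of_Icc hx.1.le)
    ((hu.mono Ioo_subset_Icc_self).stronglyMeasurableAtFilter isOpen_Ioo x hx)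
    (hu.continuousAt (Icc_mem_nhds hx.1 hx.2))

theorem antitoneOn_primitive_mul_one_sub_pow (k : ℕ) {u : ℝ → ℝ} {c T : ℝ}
    (hT0 : 0 ≤ T) (hT1 : T < 1) (huc : ContinuousOn u (Icc 0 T))
    (hu : ∀ t ∈ Icc 0 T, (1 - t) * u t ≤ c + k * ∫ s in (0:ℝ)..t, u s) :
    AntitoneOn (fun t => (c + k * ∫ s in (0:ℝ)..t, u s) * (1 - t) ^ k) (Icc 0 T) := by
  set v : ℝ → ℝ := fun t => c + k * ∫ s in (0:ℝ)..t, u s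
  have hv_cont : ContinuousOn v (Icc 0 T) := by
    have := intervalIntegral.continuousOn_primitive_interval'
      (huc.intervalIntegrable_of_Icc (μ := MeasureTheory.volume) hT0) (left_mem_uIcc (b := T))
    rw [uIcc_of_le hT0] at this
    fun_prop
  have hv_deriv (x : ℝ) (hx : x ∈ Ioo 0 T) : HasDerivAt v (k * u x) x :=
    ((hasDerivAt_integral_of_continuousOn_Icc huc hx).const_mul _).const_add c
  refine antitoneOn_of_hasDerivWithinAt_nonpos (convex_Icc 0 T) (hv_cont.mul (by fun_prop))
    (f' := fun x => k * u x * (1 - x) ^ k + v x * (k * (1 - x) ^ (k - 1) * -1))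
    (fun x hx => ?_) (fun x hx => ?_)
  · rw [interior_Icc] at hx
    exact ((hv_deriv x hx).fun_mul (((hasDerivAt_id x).const_sub 1).fun_pow k)).hasDerivWithinAt
  · rw [interior_Icc] at hx
    have hx1 : 0 < 1 - x := by linarith [hx.2]
    have huv : (1 - x) * u x ≤ v x := hu x (Ioo_subset_Icc_self hx)
    -- `k - 1` is truncated subtraction, so `k = 0` (zero derivative) is split off
    obtain _ | n := k
    · simp
    · simp only [Nat.cast_add, Nat.cast_one, add_tsub_cancel_right, pow_succ]
      have hweight : (0:ℝ) ≤ (n + 1) * (1 - x) ^ n := by positivity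
      nlinarith [mul_le_mul_of_nonneg_left huv hweight]

theorem le_one_sub_inv_pow_mul_of_le_add_integral (k : ℕ) {u : ℝ → ℝ}
    (huc : ContinuousOn u (Ico 0 1))
    (hu : ∀ t ∈ Ico (0:ℝ) 1, (1 - t) * u t ≤ u 0 + k * ∫ s in (0:ℝ)..t, u s)
    {t : ℝ} (ht : t ∈ Ico 0 1) : u t ≤ (1 - t)⁻¹ ^ (k + 1) * u 0 := by
  have hsub : Icc 0 t ⊆ Ico 0 1 := Icc_subset_Ico_right ht.2
  have hdecay := antitoneOn_primitive_mul_one_sub_pow k ht.1 ht.2 (huc.mono hsub)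
    (fun s hs => hu s (hsub hs)) (left_mem_Icc.2 ht.1) (right_mem_Icc.2 ht.1) ht.1
  simp only [intervalIntegral.integral_same, mul_zero, add_zero, sub_zero, one_pow,
    mul_one] at hdecay
  have h1t : 0 < 1 - t := by linarith [ht.2]
  rw [inv_pow, ← div_eq_inv_mul, le_div_iff₀ (by positivity)]
  calc u t * (1 - t) ^ (k + 1) = (1 - t) * u t * (1 - t) ^ k := by ring
    _ ≤ (u 0 + k * ∫ s in (0:ℝ)..t, u s) * (1 - t) ^ k := by gcongr; exact hu t ht
    _ ≤ u 0 := hdecay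

theorem crude_energy_estimate_general (u : ℝ → ℝ)
    (huc : ContinuousOn u (Ico (0:ℝ) 1))
    (hu : ∀ t ∈ Ico (0:ℝ) 1, (1 - t) * u t ≤ u 0 + 4 * ∫ s in (0:ℝ)..t, u s) :
    ∀ t ∈ Ico (0:ℝ) 1, u t ≤ (1 - t)⁻¹ ^ 5 * u 0 :=
  fun _ ht => le_one_sub_inv_pow_mul_of_le_add_integral 4 huc (by exact_mod_cast hu) ht

/-- Gronwall consequence of the crude energy estimate: if
`(1-t)u(t) ≤ u(0) + 4∫₀ᵗ u`, then `u(t) ≤ (1-t)⁻⁵ u(0)` on `[0,1)`. -/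
theorem crude_energy_estimate (u : ℝ → ℝ)
    (huc : ContinuousOn u (Ico (0:ℝ) 1))
    (hunn : ∀ t ∈ Ico (0:ℝ) 1, 0 ≤ u t)
    (hu : ∀ t ∈ Ico (0:ℝ) 1, (1 - t) * u t ≤ u 0 + 4 * ∫ s in (0:ℝ)..t, u s) :
    ∀ t ∈ Ico (0:ℝ) 1, u t ≤ (1 - t)⁻¹ ^ 5 * u 0 :=
  crude_energy_estimate_general u huc hu
end
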